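/- arXiv:1304.2946 — 2 statements merged into one kernel-verified Lean document; each statement's English description precedes it below -/
import Mathlib

section
/- Let n = 2m. For each integer k with 0 ≤ k ≤ 2^m, define S_k = { j ∈ Z/(2^m - 1)Z : wt_n((2^m+1)j + (2^m-1)k) < m }. Then |S_k| ≤ 2^{m-1}, and equality holds if and only if m is odd and k = 0. -/
/-!
Doubling rotates the `n`-bit representative of `u` modulo `2^n - 1` and negation complements
its bits, so `wt_n(2u) = wt_n(u)` and `wt_n(u) + wt_n(-u) = n` unless `u ≡ 0`.
Modulo `2^(2m) - 1`, multiplication by `2^m` fixes `2^m + 1` and negates `2^m - 1`, so the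
weight `w(j)` of `(2^m+1) j + (2^m-1) k` satisfies `w(j) + w(-j) = 2m` whenever this number is
nonzero modulo `2^(2m) - 1`, which for `0 ≤ j < 2^m - 1`, `k ≤ 2^m` fails only at `j = k = 0`.
Hence `j` and `-j` never both lie in `S_k` for `j ≠ 0`, which leaves room for at most
`2^(m-1) - 1` elements besides `0`, and `0 ∈ S_k` iff `k = 0`. Equality needs `k = 0` and no
`j ≠ 0` of weight exactly `m`; for `k = 0` the weight of `(2^m+1) j` is `2 wt(j)`, which equals
`m` for some `j` (namely `2^(m/2) - 1`) iff `m` is even.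
-/

/-- `wt n u`: the number of 1's in the binary expansion of the reduction of the
integer `u` modulo `2^n - 1`, taken in the residue system `{0, 1, ..., 2^n - 2}`. -/
def wt (n : ℕ) (u : ℤ) : ℕ :=
  (Nat.digits 2 ((u % ((2:ℤ)^n - 1)).toNat)).count 1


open Finset

def popcount (v : ℕ) : ℕ := (Nat.digits 2 v).count 1

@[simp] lemma popcount_zero : popcount 0 = 0 := by simp [popcount]

lemma popcount_eq_mod_two_add (v : ℕ) : popcount v = v % 2 + popcount (v / 2) := by
  rcases Nat.eq_zero_or_pos v with rfl | hv
  · simp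
  · rw [popcount, Nat.digits_def' one_lt_two hv, List.count_cons, ← popcount]
    rcases Nat.mod_two_eq_zero_or_one v with h | h <;> simp [h]; omega

lemma popcount_add_two_pow_mul {s a : ℕ} (b : ℕ) (ha : a < 2 ^ s) :
    popcount (a + 2 ^ s * b) = popcount a + popcount b := by
  induction s generalizing a with
  | zero =>
    obtain rfl : a = 0 := by omega
    simp
  | succ s ih =>
    have hb : 2 ^ (s + 1) * b = 2 * (2 ^ s * b) := by ring
    rw [popcount_eq_mod_two_add, popcount_eq_mod_two_add a,
      show (a + 2 ^ (s + 1) * b) / 2 = a / 2 + 2 ^ s * b by omega, ih (by omega)]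
    omega

lemma popcount_add_popcount_two_pow_sub {n v : ℕ} (hv : v < 2 ^ n) :
    popcount v + popcount (2 ^ n - 1 - v) = n := by
  induction n generalizing v with
  | zero =>
    obtain rfl : v = 0 := by omega
    simp
  | succ n ih =>
    have hp : 2 ^ (n + 1) = 2 * 2 ^ n := by ring
    have := ih (v := v / 2) (by omega)
    rw [popcount_eq_mod_two_add v, popcount_eq_mod_two_add (2 ^ (n + 1) - 1 - v),
      show (2 ^ (n + 1) - 1 - v) / 2 = 2 ^ n - 1 - v / 2 by omega]
    omega

lemma popcount_two_pow_sub_one (n : ℕ) : popcount (2 ^ n - 1) = n := by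
  simpa using popcount_add_popcount_two_pow_sub (n := n) (v := 0) (by positivity)

lemma popcount_two_mul_mod {n v : ℕ} (hv : v < 2 ^ n - 1) :
    popcount (2 * v % (2 ^ n - 1)) = popcount v := by
  by_cases h : 2 * v < 2 ^ n - 1
  · simpa [Nat.mod_eq_of_lt h] using popcount_add_two_pow_mul (s := 1) v (a := 0) (by simp)
  · have hn : n ≠ 0 := by rintro rfl; simp at hv
    have hp : 2 ^ n = 2 * 2 ^ (n - 1) := by
      rw [← pow_succ']; congr 1; omega
    obtain ⟨w, rfl⟩ : ∃ w, v = w + 2 ^ (n - 1) * 1 := ⟨v - 2 ^ (n - 1), by omega⟩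
    rw [popcount_add_two_pow_mul 1 (by omega),
      show 2 * (w + 2 ^ (n - 1) * 1) % (2 ^ n - 1) = 1 + 2 ^ 1 * w by
        rw [Nat.mod_eq_sub_mod (by omega), Nat.mod_eq_of_lt (by omega)]; omega,
      popcount_add_two_pow_mul w (by norm_num), add_comm]

lemma Even.exists_two_mul_popcount_eq {m : ℕ} (hm : 0 < m) (he : Even m) :
    ∃ j, 0 < j ∧ j < 2 ^ m - 1 ∧ 2 * popcount j = m := by
  obtain ⟨t, rfl⟩ := he
  have h1 := Nat.one_lt_two_pow (n := t) (by omega)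
  have h2 := Nat.pow_lt_pow_right (a := 2) one_lt_two (show t < t + t by omega)
  exact ⟨2 ^ t - 1, by omega, by omega, by rw [popcount_two_pow_sub_one, two_mul]⟩

lemma natCast_two_pow_sub_one (n : ℕ) : ((2 ^ n - 1 : ℕ) : ℤ) = 2 ^ n - 1 := by
  push_cast [Nat.one_le_two_pow]; ring

section wt

variable {n : ℕ}

lemma wt_congr {u u' : ℤ} (h : u ≡ u' [ZMOD 2 ^ n - 1]) : wt n u = wt n u' := by
  rw [wt, wt, h]

lemma wt_eq_popcount {u : ℤ} {v : ℕ} (hv : v < 2 ^ n - 1) (h : u ≡ v [ZMOD 2 ^ n - 1]) :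
    wt n u = popcount v := by
  have hv' : (v : ℤ) < 2 ^ n - 1 := by rw [← natCast_two_pow_sub_one]; exact_mod_cast hv
  rw [wt_congr h, wt, Int.emod_eq_of_lt (by positivity) hv', Int.toNat_natCast, popcount]

lemma exists_modEq_natCast (hn : 0 < n) (u : ℤ) :
    ∃ v : ℕ, v < 2 ^ n - 1 ∧ u ≡ v [ZMOD 2 ^ n - 1] := by
  have hM : (0 : ℤ) < 2 ^ n - 1 := sub_pos.2 (one_lt_pow₀ one_lt_two hn.ne')
  refine ⟨(u % (2 ^ n - 1)).toNat, ?_, ?_⟩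
  · rw [← Nat.cast_lt (α := ℤ), natCast_two_pow_sub_one,
      Int.toNat_of_nonneg (Int.emod_nonneg _ hM.ne')]
    exact Int.emod_lt_of_pos u hM
  · rw [Int.toNat_of_nonneg (Int.emod_nonneg _ hM.ne')]
    exact (Int.mod_modEq u _).symm

lemma wt_two_mul (hn : 0 < n) (u : ℤ) : wt n (2 * u) = wt n u := by
  obtain ⟨v, hv, huv⟩ := exists_modEq_natCast hn u
  have h2 : 2 * u ≡ (2 * v % (2 ^ n - 1) : ℕ) [ZMOD 2 ^ n - 1] := by
    rw [Int.natCast_mod, natCast_two_pow_sub_one]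
    exact (huv.mul_left 2).trans (by push_cast; exact (Int.mod_modEq _ _).symm)
  rw [wt_eq_popcount (Nat.mod_lt _ (by omega)) h2, wt_eq_popcount hv huv, popcount_two_mul_mod hv]

lemma wt_two_pow_mul (hn : 0 < n) (s : ℕ) (u : ℤ) : wt n (2 ^ s * u) = wt n u := by
  induction s with
  | zero => simp
  | succ s ih => rw [pow_succ', mul_assoc, wt_two_mul hn, ih]

lemma wt_add_wt_neg (hn : 0 < n) {u : ℤ} (hu : ¬ (2 ^ n - 1 : ℤ) ∣ u) :
    wt n u + wt n (-u) = n := by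
  obtain ⟨v, hv, huv⟩ := exists_modEq_natCast hn u
  have hv0 : v ≠ 0 := by
    rintro rfl
    exact hu (by simpa using huv.symm.dvd)
  have hneg : -u ≡ (2 ^ n - 1 - v : ℕ) [ZMOD 2 ^ n - 1] := by
    rw [Nat.cast_sub (by omega), natCast_two_pow_sub_one]
    exact huv.neg.trans (Int.modEq_iff_dvd.mpr ⟨1, by ring⟩)
  rw [wt_eq_popcount hv huv, wt_eq_popcount (by omega) hneg]
  exact popcount_add_popcount_two_pow_sub (by omega)

end wt

section involution

variable {α : Type*} [DecidableEq α] {s : Finset α} {p : α → Prop} [DecidablePred p]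

lemma card_filter_eq_card_filter_erase_add {a : α} (ha : a ∈ s) :
    #(s.filter p) = #((s.erase a).filter p) + if p a then 1 else 0 := by
  rw [filter_erase]
  split_ifs with h
  · exact (card_erase_add_one (mem_filter.2 ⟨ha, h⟩)).symm
  · rw [erase_eq_of_notMem (by simp [h]), add_zero]

variable {σ : α → α}

lemma card_filter_union_image_filter (hinv : ∀ x ∈ s, σ (σ x) = x)
    (hp : ∀ x ∈ s, p x → ¬ p (σ x)) :
    #(s.filter p ∪ (s.filter p).image σ) = 2 * #(s.filter p) := by
  have hinj : Set.InjOn σ (s.filter p) := fun a ha b hb hab => by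
    rw [← hinv a (mem_filter.1 ha).1, hab, hinv b (mem_filter.1 hb).1]
  have hdisj : Disjoint (s.filter p) ((s.filter p).image σ) := by
    refine disjoint_left.2 fun x hx hx' => ?_
    obtain ⟨y, hy, rfl⟩ := mem_image.1 hx'
    exact hp y (mem_filter.1 hy).1 (mem_filter.1 hy).2 (mem_filter.1 hx).2
  rw [card_union_of_disjoint hdisj, card_image_of_injOn hinj, two_mul]

lemma filter_union_image_filter_subset (hσ : ∀ x ∈ s, σ x ∈ s) :
    s.filter p ∪ (s.filter p).image σ ⊆ s :=
  union_subset (filter_subset p s) (image_subset_iff.2 fun x hx => hσ x (mem_filter.1 hx).1)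

lemma two_mul_card_filter_le_of_involution (hσ : ∀ x ∈ s, σ x ∈ s)
    (hinv : ∀ x ∈ s, σ (σ x) = x) (hp : ∀ x ∈ s, p x → ¬ p (σ x)) :
    2 * #(s.filter p) ≤ #s :=
  card_filter_union_image_filter hinv hp ▸ card_le_card (filter_union_image_filter_subset hσ)

lemma two_mul_card_filter_eq_iff_of_involution (hσ : ∀ x ∈ s, σ x ∈ s)
    (hinv : ∀ x ∈ s, σ (σ x) = x) (hp : ∀ x ∈ s, p x → ¬ p (σ x)) :
    2 * #(s.filter p) = #s ↔ ∀ x ∈ s, p x ∨ p (σ x) := by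
  rw [← card_filter_union_image_filter hinv hp]
  constructor
  · intro h x hx
    rw [← eq_of_subset_of_card_le (filter_union_image_filter_subset hσ) h.ge] at hx
    rcases mem_union.1 hx with hx | hx
    · exact Or.inl (mem_filter.1 hx).2
    · obtain ⟨y, hy, rfl⟩ := mem_image.1 hx
      rw [hinv y (mem_filter.1 hy).1]
      exact Or.inr (mem_filter.1 hy).2
  · intro h
    refine le_antisymm (card_le_card (filter_union_image_filter_subset hσ))
      (card_le_card fun x hx => ?_)
    rcases h x hx with hpx | hpx
    · exact mem_union_left _ (mem_filter.2 ⟨hx, hpx⟩)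
    · exact mem_union_right _ (mem_image.2 ⟨σ x, mem_filter.2 ⟨hσ x hx, hpx⟩, hinv x hx⟩)

end involution

lemma sub_mem_erase_range {R j : ℕ} (hj : j ∈ (range R).erase 0) :
    R - j ∈ (range R).erase 0 := by
  rw [mem_erase, mem_range] at hj ⊢
  omega

section

variable {m k : ℕ}

lemma two_pow_two_mul_sub_one (m : ℕ) :
    (2 : ℤ) ^ (2 * m) - 1 = (2 ^ m + 1) * (2 ^ m - 1) := by
  ring

lemma wt_add_eq_wt_sub (hm : 0 < m) (a b : ℤ) :
    wt (2 * m) ((2 ^ m + 1) * a + (2 ^ m - 1) * b) =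
      wt (2 * m) ((2 ^ m + 1) * a - (2 ^ m - 1) * b) := by
  rw [← wt_two_pow_mul (by omega) m]
  exact wt_congr (Int.modEq_iff_dvd.2 ⟨-(a + b), by ring⟩)

lemma not_dvd_mul_add_mul {j : ℕ} (hj : j < 2 ^ m - 1) (hk : k ≤ 2 ^ m)
    (hjk : j ≠ 0 ∨ k ≠ 0) :
    ¬ (2 : ℤ) ^ (2 * m) - 1 ∣ (2 ^ m + 1) * j + (2 ^ m - 1) * k := by
  intro h
  rw [two_pow_two_mul_sub_one] at h
  have hm : m ≠ 0 := by rintro rfl; simp at hj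
  have hk0 : k = 0 := by
    have h2k : ((2 ^ m + 1 : ℕ) : ℤ) ∣ ((2 * k : ℕ) : ℤ) := by
      rw [show ((2 * k : ℕ) : ℤ) = (2 ^ m + 1) * (j + k) - ((2 ^ m + 1) * j + (2 ^ m - 1) * k)
        by push_cast; ring]
      push_cast
      exact dvd_sub (dvd_mul_right _ _) ((dvd_mul_right _ _).trans h)
    -- `2 k ≤ 2 ^ (m + 1)` is an even multiple of the odd number `2 ^ m + 1`
    obtain ⟨c, hc⟩ := Int.natCast_dvd_natCast.1 h2k
    have hp : 2 ^ m = 2 * 2 ^ (m - 1) := by rw [← pow_succ']; congr 1; omega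
    have hc2 : c < 2 := by
      by_contra! hc2
      have := Nat.mul_le_mul_left (2 ^ m + 1) hc2
      omega
    interval_cases c <;> omega
  subst hk0
  rcases hjk with hj0 | hk0
  · have hR : (2 : ℤ) ^ m + 1 ≠ 0 := by positivity
    rw [Nat.cast_zero, mul_zero, add_zero, mul_dvd_mul_iff_left hR, ← natCast_two_pow_sub_one,
      Int.natCast_dvd_natCast] at h
    exact hj0 (Nat.eq_zero_of_dvd_of_lt h hj)
  · exact hk0 rfl

lemma wt_two_pow_add_one_mul {j : ℕ} (hj : j < 2 ^ m - 1) :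
    wt (2 * m) ((2 ^ m + 1) * j) = 2 * popcount j := by
  have hlt : (2 ^ m + 1) * j < 2 ^ (2 * m) - 1 := by
    rw [pow_mul', sq]
    apply Nat.lt_sub_of_add_lt
    have hj2 : j + 2 ≤ 2 ^ m := by omega
    nlinarith
  rw [wt_eq_popcount hlt (by push_cast; rfl), show (2 ^ m + 1) * j = j + 2 ^ m * j by ring,
    popcount_add_two_pow_mul j (by omega), two_mul]

variable (m k) in
def wtComb (x : ℤ) : ℕ := wt (2 * m) ((2 ^ m + 1) * x + (2 ^ m - 1) * k)

lemma wtComb_add_sub_one (x : ℤ) : wtComb m k (x + (2 ^ m - 1)) = wtComb m k x :=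
  wt_congr (Int.modEq_iff_dvd.2 ⟨-1, by ring⟩)

lemma wtComb_add_wtComb_neg (hm : 0 < m) {x : ℤ}
    (h : ¬ (2 : ℤ) ^ (2 * m) - 1 ∣ (2 ^ m + 1) * x + (2 ^ m - 1) * k) :
    wtComb m k x + wtComb m k (-x) = 2 * m := by
  have hflip := wt_add_eq_wt_sub hm (-x) (-k)
  rw [show (2 ^ m + 1) * -x + (2 ^ m - 1) * -k = -((2 ^ m + 1) * x + (2 ^ m - 1) * k) by ring,
    show (2 ^ m + 1) * -x - (2 ^ m - 1) * -k = (2 ^ m + 1) * -x + (2 ^ m - 1) * k by ring] at hflip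
  rw [wtComb, wtComb, ← hflip]
  exact wt_add_wt_neg (by omega) h

lemma wtComb_zero_of_ne_zero (hm : 0 < m) (hk : k ≤ 2 ^ m) (hk0 : k ≠ 0) :
    wtComb m k 0 = m := by
  have h1 := Nat.one_lt_two_pow hm.ne'
  have := wtComb_add_wtComb_neg hm (not_dvd_mul_add_mul (j := 0) (by omega) hk (.inr hk0))
  rw [Nat.cast_zero, neg_zero] at this
  omega

lemma wtComb_add_wtComb_sub (hm : 0 < m) (hk : k ≤ 2 ^ m) {j : ℕ}
    (hj : j ∈ (range (2 ^ m - 1)).erase 0) :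
    wtComb m k j + wtComb m k ↑(2 ^ m - 1 - j) = 2 * m := by
  rw [mem_erase, mem_range] at hj
  rw [Nat.cast_sub hj.2.le, natCast_two_pow_sub_one, sub_eq_neg_add, wtComb_add_sub_one]
  exact wtComb_add_wtComb_neg hm (not_dvd_mul_add_mul hj.2 hk (.inl hj.1))

lemma card_erase_zero_range_two_pow_sub_one (hm : 0 < m) :
    #((range (2 ^ m - 1)).erase 0) = 2 ^ m - 2 := by
  have := Nat.one_lt_two_pow hm.ne'
  rw [card_erase_of_mem (mem_range.2 (by omega)), card_range]
  omega

lemma two_mul_card_filter_wtComb_lt_le (hm : 0 < m) (hk : k ≤ 2 ^ m) :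
    2 * #(((range (2 ^ m - 1)).erase 0).filter fun j : ℕ => wtComb m k j < m) ≤ 2 ^ m - 2 :=
  card_erase_zero_range_two_pow_sub_one hm ▸
    two_mul_card_filter_le_of_involution (fun _ => sub_mem_erase_range)
      (fun j hj => Nat.sub_sub_self (mem_range.1 (mem_of_mem_erase hj)).le)
      (fun j hj _ => by have := wtComb_add_wtComb_sub hm hk hj; omega)

lemma two_mul_card_filter_wtComb_lt_eq_iff (hm : 0 < m) (hk : k ≤ 2 ^ m) :
    2 * #(((range (2 ^ m - 1)).erase 0).filter fun j : ℕ => wtComb m k j < m) = 2 ^ m - 2 ↔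
      ∀ j ∈ (range (2 ^ m - 1)).erase 0, wtComb m k j ≠ m := by
  rw [← card_erase_zero_range_two_pow_sub_one hm,
    two_mul_card_filter_eq_iff_of_involution (fun _ => sub_mem_erase_range)
      (fun j hj => Nat.sub_sub_self (mem_range.1 (mem_of_mem_erase hj)).le)
      (fun j hj _ => by have := wtComb_add_wtComb_sub hm hk hj; omega)]
  refine forall₂_congr fun j hj => ?_
  have := wtComb_add_wtComb_sub hm hk hj
  omega

lemma wtComb_zero_natCast {j : ℕ} (hj : j < 2 ^ m - 1) : wtComb m 0 j = 2 * popcount j := by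
  simpa [wtComb] using wt_two_pow_add_one_mul hj

lemma forall_wtComb_zero_ne_iff_odd (hm : 0 < m) :
    (∀ j ∈ (range (2 ^ m - 1)).erase 0, wtComb m 0 j ≠ m) ↔ Odd m := by
  rw [← Nat.not_even_iff_odd]
  constructor
  · intro h he
    obtain ⟨j, hj0, hjR, hj⟩ := he.exists_two_mul_popcount_eq hm
    exact h j (by rw [mem_erase, mem_range]; omega) (by rw [wtComb_zero_natCast hjR, hj])
  · intro hodd j hj h
    rw [mem_erase, mem_range] at hj
    rw [wtComb_zero_natCast hj.2] at h
    exact hodd ⟨_, h ▸ two_mul _⟩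

end

theorem stmt_5 (m k : ℕ) (hm : 0 < m) (hk : k ≤ 2^m)
    (S : Finset ℕ)
    (hS : S = (Finset.range (2^m - 1)).filter
      (fun j : ℕ => wt (2*m) ((2^m + 1) * (j : ℤ) + (2^m - 1) * (k : ℤ)) < m)) :
    S.card ≤ 2^(m-1) ∧ (S.card = 2^(m-1) ↔ Odd m ∧ k = 0) := by
  have h1 := Nat.one_lt_two_pow hm.ne'
  have hp : 2 ^ m = 2 * 2 ^ (m - 1) := by rw [← pow_succ']; congr 1; omega
  have hle := two_mul_card_filter_wtComb_lt_le hm hk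
  have heq := two_mul_card_filter_wtComb_lt_eq_iff hm hk
  change S = (range (2 ^ m - 1)).filter fun j : ℕ => wtComb m k j < m at hS
  rw [hS, card_filter_eq_card_filter_erase_add (mem_range.2 (by omega : 0 < 2 ^ m - 1))]
  rcases eq_or_ne k 0 with rfl | hk0
  · rw [if_pos (by simp [wtComb, wt, hm]), ← forall_wtComb_zero_ne_iff_odd hm, ← heq]
    omega
  · rw [if_neg (by simp [wtComb_zero_of_ne_zero hm hk hk0])]
    simp only [hk0, and_false, iff_false]
    omega
end

section
/- Let n = 2m and let g be a Boolean function on F_{2^n} of algebraic degree strictly less than m, written in polar coordinates as g(yz) = Σ_{j=0}^{2^m-2} Σ_{k=0}^{2^m} g_{j,k} y^j z^k for y ∈ F_{2^m}^*, z ∈ U. If g vanishes on Δ × U for a set Δ ⊆ F_{2^m}^* of 2^{m-1} consecutive powers of a primitive element β of F_{2^m}, then g_{j,k} = 0 for all j, k; i.e., g vanishes on all of F_{2^n}^*. -/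
/-!
Sort the monomials of `p` by the residue of their exponent modulo `2^m + 1`. Averaging
`p (y z)` over `z ∈ U` against a character of `U` isolates one class, `∑_{i ≡ j} c_i y^i`, which
therefore vanishes at the `2^(m-1)` consecutive powers `y = β^(s+t)`. Distinct exponents below
`2^(2m) - 1` in one class give distinct `β^i` (CRT, as `2^m - 1` and `2^m + 1` are coprime), and
a class holds at most `2^(m-1)` exponents of binary weight `< m`: swapping the two halves of the
`2m`-bit word and complementing preserves the class and sends weight `w` to `2m - w`. A
Vandermonde system then kills every coefficient of the class.
-/

/-- The algebraic degree of a Boolean function on `𝔽_{2^n}` given by its univariate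
representation `p` (a polynomial of degree at most `2^n - 1`): the maximum binary
weight of an exponent occurring in `p`. -/
def algDeg {F : Type*} [Field F] (p : Polynomial F) : ℕ :=
  p.support.sup fun i => (Nat.digits 2 i).count 1

open Finset Polynomial

def binaryWeight (n : ℕ) : ℕ := (Nat.digits 2 n).count 1

theorem binaryWeight_zero : binaryWeight 0 = 0 := rfl

theorem binaryWeight_eq_mod_two_add_div_two (n : ℕ) :
    binaryWeight n = n % 2 + binaryWeight (n / 2) := by
  rcases n.eq_zero_or_pos with rfl | hn
  · rfl
  · rw [binaryWeight, Nat.digits_def' one_lt_two hn, List.count_cons, ← binaryWeight]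
    rcases Nat.mod_two_eq_zero_or_one n with h | h <;> simp [h, add_comm]

theorem binaryWeight_add_two_pow_mul {a : ℕ} (m b : ℕ) (ha : a < 2 ^ m) :
    binaryWeight (a + 2 ^ m * b) = binaryWeight a + binaryWeight b := by
  induction m generalizing a with
  | zero =>
    obtain rfl : a = 0 := by simpa using ha
    simp [binaryWeight_zero]
  | succ m ih =>
    rw [binaryWeight_eq_mod_two_add_div_two, binaryWeight_eq_mod_two_add_div_two a, pow_succ,
      mul_right_comm, show (a + 2 ^ m * b * 2) / 2 = a / 2 + 2 ^ m * b by omega, ih (by omega)]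
    omega

theorem binaryWeight_two_pow_sub_one_sub {a : ℕ} (m : ℕ) (ha : a < 2 ^ m) :
    binaryWeight (2 ^ m - 1 - a) + binaryWeight a = m := by
  induction m generalizing a with
  | zero =>
    obtain rfl : a = 0 := by simpa using ha
    rfl
  | succ m ih =>
    rw [binaryWeight_eq_mod_two_add_div_two, binaryWeight_eq_mod_two_add_div_two a, pow_succ,
      show (2 ^ m * 2 - 1 - a) / 2 = 2 ^ m - 1 - a / 2 by omega]
    have := ih (a := a / 2) (by omega)
    omega

theorem binaryWeight_two_pow_sub_one (n : ℕ) : binaryWeight (2 ^ n - 1) = n := by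
  simpa [binaryWeight_zero] using binaryWeight_two_pow_sub_one_sub n (Nat.two_pow_pos n)

def halfSwapCompl (q i : ℕ) : ℕ := (q - 1 - i / q) + q * (q - 1 - i % q)

section halfSwapCompl

variable {q a b : ℕ}

theorem exists_eq_add_mul_of_lt_mul {i : ℕ} (hi : i < q * q) :
    ∃ a b, a < q ∧ b < q ∧ i = a + q * b :=
  ⟨i % q, i / q, Nat.mod_lt _ (Nat.pos_of_mul_pos_left (by omega : 0 < q * q)),
    Nat.div_lt_of_lt_mul hi, (Nat.mod_add_div i q).symm⟩

theorem halfSwapCompl_add_mul (ha : a < q) :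
    halfSwapCompl q (a + q * b) = (q - 1 - b) + q * (q - 1 - a) := by
  rw [halfSwapCompl, Nat.add_mul_mod_self_left, Nat.mod_eq_of_lt ha,
    Nat.add_mul_div_left _ _ (by omega), Nat.div_eq_of_lt ha, zero_add]

theorem add_mul_lt_mul_self (ha : a < q) (hb : b < q) : a + q * b < q * q := by
  nlinarith

theorem halfSwapCompl_add_mul_lt (ha : a < q) (hb : b < q) :
    halfSwapCompl q (a + q * b) < q * q := by
  rw [halfSwapCompl_add_mul ha]
  exact add_mul_lt_mul_self (by omega) (by omega)

theorem halfSwapCompl_halfSwapCompl_add_mul (ha : a < q) (hb : b < q) :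
    halfSwapCompl q (halfSwapCompl q (a + q * b)) = a + q * b := by
  rw [halfSwapCompl_add_mul ha, halfSwapCompl_add_mul (by omega), Nat.sub_sub_self (by omega),
    Nat.sub_sub_self (by omega)]

theorem halfSwapCompl_add_mul_modEq (ha : a < q) (hb : b < q) :
    halfSwapCompl q (a + q * b) ≡ a + q * b [MOD q + 1] := by
  rw [halfSwapCompl_add_mul ha, Nat.modEq_iff_dvd, Nat.sub_sub, Nat.sub_sub]
  refine ⟨a + b + 1 - q, ?_⟩
  push_cast [Nat.cast_sub (by omega : 1 + b ≤ q), Nat.cast_sub (by omega : 1 + a ≤ q)]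
  ring

theorem binaryWeight_halfSwapCompl_add_mul {m : ℕ} (ha : a < 2 ^ m) (hb : b < 2 ^ m) :
    binaryWeight (halfSwapCompl (2 ^ m) (a + 2 ^ m * b)) + binaryWeight (a + 2 ^ m * b) =
      2 * m := by
  rw [halfSwapCompl_add_mul ha, binaryWeight_add_two_pow_mul m _ ha,
    binaryWeight_add_two_pow_mul m _ (by omega)]
  have := binaryWeight_two_pow_sub_one_sub m ha
  have := binaryWeight_two_pow_sub_one_sub m hb
  omega

end halfSwapCompl

theorem card_filter_range_mul_self_modEq_le (q r : ℕ) :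
    #{i ∈ range (q * q) | i ≡ r [MOD q + 1]} ≤ q := by
  rw [← Nat.count_eq_card_filter_range, Nat.count_modEq_card _ (by omega : 0 < q + 1)]
  rcases q.eq_zero_or_pos with rfl | hq
  · simp
  have : q * q / (q + 1) < q := Nat.div_lt_of_lt_mul (by nlinarith)
  split_ifs <;> omega

theorem card_filter_modEq_binaryWeight_lt_le (m r : ℕ) :
    #{i ∈ range (2 ^ (2 * m)) | i ≡ r [MOD 2 ^ m + 1] ∧ binaryWeight i < m} ≤ 2 ^ (m - 1) := by
  rw [two_mul, pow_add]
  set q := 2 ^ m with hq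
  set A := {i ∈ range (q * q) | i ≡ r [MOD q + 1] ∧ binaryWeight i < m}
  set B := {i ∈ range (q * q) | i ≡ r [MOD q + 1] ∧ m < binaryWeight i}
  have hAB : Set.MapsTo (halfSwapCompl q) A B := by
    intro i hi
    simp only [A, B, coe_filter, mem_range, Set.mem_ofPred_eq] at hi ⊢
    obtain ⟨a, b, ha, hb, rfl⟩ := exists_eq_add_mul_of_lt_mul hi.1
    have := binaryWeight_halfSwapCompl_add_mul ha hb
    rw [← hq] at this
    exact ⟨halfSwapCompl_add_mul_lt ha hb, (halfSwapCompl_add_mul_modEq ha hb).trans hi.2.1,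
      by omega⟩
  have hinj : Set.InjOn (halfSwapCompl q) A := by
    refine Set.LeftInvOn.injOn (f₁' := halfSwapCompl q) fun i hi => ?_
    simp only [A, coe_filter, mem_range, Set.mem_ofPred_eq] at hi
    obtain ⟨a, b, ha, hb, rfl⟩ := exists_eq_add_mul_of_lt_mul hi.1
    exact halfSwapCompl_halfSwapCompl_add_mul ha hb
  have hA_le_B : #A ≤ #B := card_le_card_of_injOn _ hAB hinj
  have hclass : #A + #B ≤ q := by
    rw [← card_union_of_disjoint (disjoint_filter.mpr fun _ _ hA hB => by omega)]
    refine (card_le_card fun i => ?_).trans (card_filter_range_mul_self_modEq_le q r)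
    simp only [mem_union, mem_filter]
    tauto
  have hq_le : q ≤ 2 * 2 ^ (m - 1) := by
    rw [← pow_succ']; exact Nat.pow_le_pow_right (by norm_num) (by omega)
  omega

theorem Nat.two_pow_sub_one_mul_two_pow_add_one (m : ℕ) :
    (2 ^ m - 1) * (2 ^ m + 1) = 2 ^ (2 * m) - 1 := by
  have := Nat.one_le_two_pow (n := m)
  have := Nat.one_le_two_pow (n := 2 * m)
  zify [*]
  ring

theorem Nat.coprime_two_pow_sub_one_two_pow_add_one {m : ℕ} (hm : 0 < m) :
    Nat.Coprime (2 ^ m - 1) (2 ^ m + 1) := by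
  rw [show 2 ^ m + 1 = 2 + 1 * (2 ^ m - 1) by have := Nat.one_le_two_pow (n := m); omega,
    Nat.coprime_add_mul_right_right, Nat.coprime_comm, Nat.coprime_two_left]
  exact Nat.Even.sub_odd Nat.one_le_two_pow (Nat.even_pow.mpr ⟨even_two, hm.ne'⟩) odd_one

theorem eq_of_pow_eq_pow_of_modEq {M : Type*} [Monoid M] {x : M} {b i j : ℕ}
    (hcop : (orderOf x).Coprime b) (hi : i < orderOf x * b) (hj : j < orderOf x * b)
    (hmod : i ≡ j [MOD b]) (h : x ^ i = x ^ j) : i = j := by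
  have hx : IsOfFinOrder x := orderOf_pos_iff.mp (Nat.pos_of_ne_zero fun h => by simp [h] at hi)
  exact Nat.ModEq.eq_of_lt_of_lt
    ((Nat.modEq_and_modEq_iff_modEq_mul hcop).mp ⟨hx.pow_eq_pow_iff_modEq.mp h, hmod⟩) hi hj

theorem FiniteField.exists_orderOf_eq {K : Type*} [Field K] [Fintype K] {d : ℕ}
    (hd : d ∣ Fintype.card K - 1) : ∃ w : K, orderOf w = d := by
  classical
  obtain ⟨g, hg⟩ := IsCyclic.exists_ofOrder_eq_natCard (α := Kˣ)
  rw [Nat.card_eq_fintype_card, Fintype.card_units] at hg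
  have := Fintype.one_lt_card (α := K)
  exact ⟨(g ^ (orderOf g / d) : Kˣ), by
    rw [orderOf_units, orderOf_pow_orderOf_div (by omega) (hg ▸ hd)]⟩

theorem Finset.eq_zero_of_forall_sum_mul_pow_eq_zero {R ι : Type*} [CommRing R] [IsDomain R]
    {S : Finset ι} {x c : ι → R} (hx : Set.InjOn x S)
    (h : ∀ t < #S, ∑ i ∈ S, c i * x i ^ t = 0) : ∀ i ∈ S, c i = 0 := by
  set e := S.equivFin.symm
  have hvand := Matrix.eq_zero_of_forall_pow_sum_mul_pow_eq_zero
    (f := fun k => x (e k)) (v := fun k => c (e k))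
    (hx.injective.comp e.injective) fun t => by
      rw [← h t t.2, ← S.sum_coe_sort]
      exact e.sum_comp fun i => c i * x i ^ (t : ℕ)
  intro i hi
  simpa [e] using congrFun hvand (S.equivFin ⟨i, hi⟩)

theorem Finset.eq_zero_of_forall_sum_mul_pow_add_eq_zero {R ι : Type*} [CommRing R] [IsDomain R]
    {S : Finset ι} {x c : ι → R} (s : ℕ) (hx : Set.InjOn x S) (hx0 : ∀ i ∈ S, x i ≠ 0)
    (h : ∀ t < #S, ∑ i ∈ S, c i * x i ^ (s + t) = 0) : ∀ i ∈ S, c i = 0 := by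
  have hshift := eq_zero_of_forall_sum_mul_pow_eq_zero (c := fun i => c i * x i ^ s) hx
    fun t ht => by simpa only [pow_add, mul_assoc] using h t ht
  exact fun i hi => (mul_eq_zero.mp (hshift i hi)).resolve_right (pow_ne_zero _ (hx0 i hi))

theorem sum_range_pow_of_pow_eq_one {K : Type*} [Field K] [DecidableEq K] {v : K} {N : ℕ}
    (hv : v ^ N = 1) :
    ∑ a ∈ range N, v ^ a = if v = 1 then (N : K) else 0 := by
  split_ifs with h
  · simp [h]
  · rw [geom_sum_eq h, hv, sub_self, zero_div]

theorem Nat.dvd_pred_mul_add_iff_modEq {N i j : ℕ} (hN : 0 < N) :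
    N ∣ (N - 1) * j + i ↔ i ≡ j [MOD N] := by
  rw [Nat.modEq_iff_dvd, ← Int.natCast_dvd_natCast]
  push_cast [Nat.cast_sub hN]
  rw [show ((N : ℤ) - 1) * j + i = N * j - (j - i) by ring, dvd_sub_right (dvd_mul_right _ _)]

/-- The weight `(w ^ a) ^ ((N - 1) * j)` is `w ^ (-a j)` written with natural exponents. -/
theorem Polynomial.sum_range_pow_mul_eval_mul_pow {K : Type*} [Field K] {w : K} {N : ℕ}
    (hw : orderOf w = N) (hN : 0 < N) (p : K[X]) (j : ℕ) (y : K) :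
    ∑ a ∈ range N, (w ^ a) ^ ((N - 1) * j) * p.eval (y * w ^ a) =
      N * ∑ i ∈ p.support with i ≡ j [MOD N], p.coeff i * y ^ i := by
  classical
  have hroot (i : ℕ) : (w ^ ((N - 1) * j + i)) ^ N = 1 := by
    rw [pow_right_comm, ← hw, pow_orderOf_eq_one, one_pow]
  have hone (i : ℕ) : w ^ ((N - 1) * j + i) = 1 ↔ i ≡ j [MOD N] := by
    rw [← orderOf_dvd_iff_pow_eq_one, hw, Nat.dvd_pred_mul_add_iff_modEq hN]
  calc ∑ a ∈ range N, (w ^ a) ^ ((N - 1) * j) * p.eval (y * w ^ a)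
      = ∑ a ∈ range N, ∑ i ∈ p.support, p.coeff i * y ^ i * (w ^ ((N - 1) * j + i)) ^ a := by
        refine sum_congr rfl fun a _ => ?_
        rw [eval_eq_sum, Polynomial.sum_def, mul_sum]
        refine sum_congr rfl fun i _ => ?_
        ring
    _ = ∑ i ∈ p.support, p.coeff i * y ^ i * if i ≡ j [MOD N] then (N : K) else 0 := by
        rw [sum_comm]
        refine sum_congr rfl fun i _ => ?_
        rw [← mul_sum, sum_range_pow_of_pow_eq_one (hroot i), if_congr (hone i) rfl rfl]
    _ = N * ∑ i ∈ p.support with i ≡ j [MOD N], p.coeff i * y ^ i := by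
        rw [sum_filter, mul_sum]
        refine sum_congr rfl fun i _ => ?_
        split_ifs <;> ring

theorem FiniteField.natCast_two_pow_add_one_eq_one {K : Type*} [Field K] [Fintype K] {m : ℕ}
    (hK : Fintype.card K = 2 ^ (2 * m)) : ((2 ^ m + 1 : ℕ) : K) = 1 := by
  have h := FiniteField.cast_card_eq_zero K
  rw [hK, two_mul, pow_add, Nat.cast_mul, mul_self_eq_zero] at h
  rw [Nat.cast_add, h, zero_add, Nat.cast_one]

section support

variable {F : Type*} [Field F] {p : F[X]} {m : ℕ}

theorem binaryWeight_le_algDeg {i : ℕ} (hi : i ∈ p.support) :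
    binaryWeight i ≤ algDeg p :=
  Finset.le_sup (f := binaryWeight) hi

theorem lt_two_pow_sub_one_of_mem_support {n i : ℕ}
    (hdeg : p.natDegree < 2 ^ n) (halg : algDeg p < n) (hi : i ∈ p.support) :
    i < 2 ^ n - 1 := by
  have hwt := binaryWeight_le_algDeg hi
  have hle := le_natDegree_of_mem_supp i hi
  have : i ≠ 2 ^ n - 1 := by
    rintro rfl
    rw [binaryWeight_two_pow_sub_one] at hwt
    omega
  omega

theorem card_filter_support_modEq_le (hdeg : p.natDegree < 2 ^ (2 * m)) (halg : algDeg p < m)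
    (r : ℕ) : #{i ∈ p.support | i ≡ r [MOD 2 ^ m + 1]} ≤ 2 ^ (m - 1) := by
  refine (card_le_card fun i hi => ?_).trans (card_filter_modEq_binaryWeight_lt_le m r)
  obtain ⟨hi, hmod⟩ := mem_filter.mp hi
  have := lt_two_pow_sub_one_of_mem_support hdeg (by omega) hi
  exact mem_filter.mpr ⟨mem_range.mpr (by omega), hmod, (binaryWeight_le_algDeg hi).trans_lt halg⟩

theorem pow_injOn_filter_support_modEq {β : F} (hm : 0 < m) (hβ : orderOf β = 2 ^ m - 1)
    (hdeg : p.natDegree < 2 ^ (2 * m)) (halg : algDeg p < 2 * m) (r : ℕ) :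
    Set.InjOn (β ^ ·) ({i ∈ p.support | i ≡ r [MOD 2 ^ m + 1]} : Finset ℕ) := by
  have hord : orderOf β * (2 ^ m + 1) = 2 ^ (2 * m) - 1 := by
    rw [hβ, Nat.two_pow_sub_one_mul_two_pow_add_one]
  intro i hi j hj h
  obtain ⟨hi, hmi⟩ := mem_filter.mp hi
  obtain ⟨hj, hmj⟩ := mem_filter.mp hj
  exact eq_of_pow_eq_pow_of_modEq (hβ ▸ Nat.coprime_two_pow_sub_one_two_pow_add_one hm)
    (hord ▸ lt_two_pow_sub_one_of_mem_support hdeg halg hi)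
    (hord ▸ lt_two_pow_sub_one_of_mem_support hdeg halg hj) (hmi.trans hmj.symm) h

end support

theorem stmt_19_general (m : ℕ) (hm : 0 < m) (F : Type*) [Field F] [Fintype F]
    (hF : Fintype.card F = 2^(2*m))
    (β : F) (hβ : orderOf β = 2^m - 1)
    (p : Polynomial F) (hdeg : p.natDegree < 2^(2*m))
    (halg : algDeg p < m)
    (s : ℕ)
    (hvan : ∀ i : ℕ, i < 2^(m-1) → ∀ z : F, z^(2^m + 1) = 1 →
      p.eval (β^(s + i) * z) = 0) :
    ∀ x : F, x ≠ 0 → p.eval x = 0 := by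
  obtain ⟨w, hw⟩ : ∃ w : F, orderOf w = 2 ^ m + 1 := FiniteField.exists_orderOf_eq
    ⟨2 ^ m - 1, by rw [hF, ← Nat.two_pow_sub_one_mul_two_pow_add_one, mul_comm]⟩
  have hβ0 : β ≠ 0 := by
    rintro rfl
    rw [orderOf_zero] at hβ
    have := Nat.one_lt_two_pow hm.ne'
    omega
  suffices p = 0 by simp [this]
  ext i₀
  rw [coeff_zero]
  by_contra hi₀
  set S := {i ∈ p.support | i ≡ i₀ [MOD 2 ^ m + 1]}
  have hS_vanish (t : ℕ) (ht : t < #S) : ∑ i ∈ S, p.coeff i * (β ^ i) ^ (s + t) = 0 := by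
    have hvan_U (a : ℕ) := hvan t (ht.trans_le (card_filter_support_modEq_le hdeg halg i₀)) (w ^ a)
      (by rw [pow_right_comm, ← hw, pow_orderOf_eq_one, one_pow])
    have h := sum_range_pow_mul_eval_mul_pow hw (Nat.succ_pos _) p i₀ (β ^ (s + t))
    rw [FiniteField.natCast_two_pow_add_one_eq_one hF, one_mul,
      sum_eq_zero fun a _ => by rw [hvan_U, mul_zero]] at h
    simpa only [← pow_mul, mul_comm _ (s + t)] using h.symm
  exact hi₀ (eq_zero_of_forall_sum_mul_pow_add_eq_zero s
    (pow_injOn_filter_support_modEq hm hβ hdeg (by omega) i₀) (fun i _ => pow_ne_zero i hβ0)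
    hS_vanish i₀ (mem_filter.mpr ⟨mem_support_iff.mpr hi₀, rfl⟩))

/-- Let `n = 2m` and let `g` be a Boolean function on `𝔽_{2^n}` (given by its
univariate representation `p`, of degree `< 2^n`, with values in `{0,1}`) of algebraic
degree strictly less than `m`. If `g` vanishes on `Δ × U`, where
`Δ = {β^s, β^(s+1), ..., β^(s+2^(m-1)-1)}` is a set of `2^(m-1)` consecutive powers of
a primitive element `β` of `𝔽_{2^m}` and `U` is the subgroup of `𝔽_{2^n}^*` of order
`2^m + 1`, then `g` vanishes on all of `𝔽_{2^n}^*`. -/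
theorem stmt_19 (m : ℕ) (hm : 0 < m) (F : Type*) [Field F] [Fintype F]
    (hF : Fintype.card F = 2^(2*m))
    (β : F) (hβ : orderOf β = 2^m - 1)
    (p : Polynomial F) (hdeg : p.natDegree < 2^(2*m))
    (hbool : ∀ x : F, p.eval x * p.eval x = p.eval x)
    (halg : algDeg p < m)
    (s : ℕ)
    (hvan : ∀ i : ℕ, i < 2^(m-1) → ∀ z : F, z^(2^m + 1) = 1 →
      p.eval (β^(s + i) * z) = 0) :
    ∀ x : F, x ≠ 0 → p.eval x = 0 :=
  stmt_19_general m hm F hF β hβ p hdeg halg s hvan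
end
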